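/- For every graph G with clique number ω(G), the algorithm Greedy-Edmonds (greedily remove maximum cliques while ω ≥ 3, then take a maximum matching on the remaining triangle-free graph) returns a clique partition X such that OPT ≤ (2·ω'(G) / (ω'(G)+1)) · |E(X)|, where ω'(G) = C(ω(G),2) and OPT is the maximum number of edges in any clique partition of G. -/
import Mathlib

open Finset

/-- `Phase1 G R L R'`: starting from vertex set `R`, the greedy phase of Greedy-Edmonds
removes the maximum cliques listed in `L` (each of size at least 3) and stops at the
vertex set `R'`, which has clique number at most 2. -/
def Phase1 {V : Type*} [DecidableEq V] (G : SimpleGraph V) :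
    Finset V → List (Finset V) → Finset V → Prop
  | R, [], R' => R = R' ∧ ∀ Y ⊆ R, G.IsClique ↑Y → Y.card ≤ 2
  | R, X :: L, R' => X ⊆ R ∧ G.IsClique ↑X ∧ 3 ≤ X.card ∧
      (∀ Y ⊆ R, G.IsClique ↑Y → Y.card ≤ X.card) ∧ Phase1 G (R \ X) L R'

/-- `M` is a matching of `G` inside the vertex set `R`, given as a set of pairwise
disjoint 2-element cliques. -/
def IsMatchingOn {V : Type*} [DecidableEq V] (G : SimpleGraph V) (R : Finset V)
    (M : Finset (Finset V)) : Prop :=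
  (∀ m ∈ M, m ⊆ R ∧ m.card = 2 ∧ G.IsClique ↑m) ∧
    ∀ m ∈ M, ∀ m' ∈ M, m ≠ m' → Disjoint m m'

lemma two_mul_choose_two (n : ℕ) : 2 * n.choose 2 = n * (n - 1) := by
  rw [Nat.choose_two_right, Nat.mul_div_cancel']
  obtain _ | m := n
  · simp
  · simpa [Nat.succ_sub_one, mul_comm] using (Nat.even_mul_succ_self m).two_dvd

/-- The key per-part charging inequality. -/
lemma key_ineq (a r c : ℕ) (h : a + r ≤ c) (hc : 3 ≤ c) :
    (a + r).choose 2 + (if 2 ≤ a + r then 1 else 0)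
      ≤ a * (c - 1) + r.choose 2 + (if 2 ≤ r then 1 else 0) := by
  rcases Nat.eq_zero_or_pos a with rfl | ha
  · simp
  obtain ⟨d, rfl⟩ : ∃ d, c = d + 3 := ⟨c - 3, by omega⟩
  obtain ⟨e, rfl⟩ : ∃ e, a = e + 1 := ⟨a - 1, by omega⟩
  have hd : d + 3 - 1 = d + 2 := by omega
  rw [hd]
  obtain _ | r := r
  · have h1 : 2 * (e + 1 + 0).choose 2 = (e + 1) * e := by
      rw [two_mul_choose_two]; rfl
    rcases le_or_gt 2 (e + 1 + 0) with h2' | h2'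
    · rw [if_pos h2', if_neg (by omega)]
      have hch : Nat.choose 0 2 = 0 := rfl
      have t1 : (e + 1) * e ≤ (e + 1) * (d + 2) := Nat.mul_le_mul_left _ (by omega)
      have t2 : 2 * 1 ≤ (e + 1) * (d + 2) := Nat.mul_le_mul (by omega) (by omega)
      omega
    · rw [if_neg (by omega), if_neg (by omega)]
      have : e = 0 := by omega
      subst this; simp
  · obtain _ | r := r
    · -- r = 1
      rw [if_pos (by omega), if_neg (by omega)]
      simp only [Nat.zero_add]
      have h1 : 2 * (e + 1 + 1).choose 2 = (e + 1) * (e + 2) := by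
        rw [two_mul_choose_two]
        have : e + 1 + 1 - 1 = e + 1 := rfl
        rw [this]; ring
      have hch : Nat.choose 1 2 = 0 := rfl
      have t1 : (e + 1) * (e + 2) ≤ (e + 1) * (d + 3) :=
        Nat.mul_le_mul_left _ (by omega)
      have t2 : (e + 1) * (d + 3) = (e + 1) * (d + 2) + (e + 1) := by ring
      have t3 : (e + 1) * 2 ≤ (e + 1) * (d + 2) := Nat.mul_le_mul_left _ (by omega)
      omega
    · -- r = r + 2
      rw [if_pos (by omega), if_pos (by omega)]
      have h1 := two_mul_choose_two (e + 1 + (r + 2))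
      have h2 := two_mul_choose_two (r + 2)
      have he : e + r ≤ d := by omega
      have hsub1 : e + 1 + (r + 2) - 1 = e + r + 2 := by omega
      have hsub2 : r + 2 - 1 = r + 1 := by omega
      rw [hsub1] at h1; rw [hsub2] at h2
      nlinarith [h1, h2, he]

section
variable {V : Type*} [Fintype V] [DecidableEq V]

lemma sum_inter_card (P : Finpartition (Finset.univ : Finset V)) (X : Finset V) :
    ∑ p ∈ P.parts, (p ∩ X).card = X.card := by
  have hX : X = P.parts.biUnion (fun p => p ∩ X) := by
    ext x
    simp only [mem_biUnion, mem_inter]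
    constructor
    · intro hx
      obtain ⟨p, hp, hxp⟩ := P.exists_mem (mem_univ x)
      exact ⟨p, hp, hxp, hx⟩
    · rintro ⟨p, _, _, hx⟩; exact hx
  conv_rhs => rw [hX]
  rw [card_biUnion]
  intro p hp q hq hpq
  exact (P.disjoint hp hq hpq).mono inter_subset_left inter_subset_left

omit [Fintype V] in
lemma inter_card_split (p S X : Finset V) (hXS : X ⊆ S) :
    (p ∩ S).card = (p ∩ X).card + (p ∩ (S \ X)).card := by
  rw [← card_union_of_disjoint]
  · congr 1
    ext x
    simp only [mem_inter, mem_union, mem_sdiff]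
    constructor
    · rintro ⟨hxp, hxS⟩
      by_cases hx : x ∈ X
      · exact Or.inl ⟨hxp, hx⟩
      · exact Or.inr ⟨hxp, hxS, hx⟩
    · rintro (⟨hxp, hx⟩ | ⟨hxp, hxS, _⟩)
      · exact ⟨hxp, hXS hx⟩
      · exact ⟨hxp, hxS⟩
  · exact disjoint_left.mpr fun x hx hx' =>
      (mem_sdiff.mp (mem_inter.mp hx').2).2 (mem_inter.mp hx).2

lemma phase_bound (G : SimpleGraph V) (R : Finset V) (M : Finset (Finset V))
    (hMmax : ∀ M' : Finset (Finset V), IsMatchingOn G R M' → M'.card ≤ M.card)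
    (P : Finpartition (Finset.univ : Finset V)) (hP : ∀ p ∈ P.parts, G.IsClique ↑p) :
    ∀ (L : List (Finset V)) (S : Finset V), Phase1 G S L R →
      ∑ p ∈ P.parts, ((p ∩ S).card.choose 2 + (if 2 ≤ (p ∩ S).card then 1 else 0))
        ≤ 2 * (((L.map fun X => X.card.choose 2).sum) + M.card) := by
  intro L
  induction L with
  | nil =>
    intro S hS
    obtain ⟨rfl, h2⟩ := hS
    have hterm : ∀ p ∈ P.parts,
        (p ∩ S).card.choose 2 + (if 2 ≤ (p ∩ S).card then 1 else 0)
          = if (p ∩ S).card = 2 then 2 else 0 := by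
      intro p hp
      have hle : (p ∩ S).card ≤ 2 :=
        h2 _ inter_subset_right ((hP p hp).subset (by exact_mod_cast inter_subset_left))
      interval_cases h : (p ∩ S).card <;> simp
    rw [Finset.sum_congr rfl hterm]
    classical
    rw [← Finset.sum_filter]
    rw [Finset.sum_const, smul_eq_mul]
    set T := P.parts.filter (fun p => (p ∩ S).card = 2) with hT
    set M' := T.image (fun p => p ∩ S) with hM'
    have hinj : Set.InjOn (fun p => p ∩ S) ↑T := by
      intro p hp q hq hpq
      simp only [hT, coe_filter, Set.mem_setOf_eq] at hp hq
      by_contra hne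
      have hd := P.disjoint hp.1 hq.1 hne
      have hne' : (p ∩ S).Nonempty := card_pos.mp (by omega)
      obtain ⟨x, hx⟩ := hne'
      have hpq2 : p ∩ S = q ∩ S := hpq
      have hx' : x ∈ q ∩ S := by rw [← hpq2]; exact hx
      exact (disjoint_left.mp hd (mem_inter.mp hx).1) (mem_inter.mp hx').1
    have hcard : M'.card = T.card := Finset.card_image_of_injOn hinj
    have hmatch : IsMatchingOn G S M' := by
      constructor
      · intro m hm
        obtain ⟨p, hp, rfl⟩ := Finset.mem_image.mp hm
        simp only [hT, mem_filter] at hp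
        exact ⟨inter_subset_right, hp.2,
          (hP p hp.1).subset (by exact_mod_cast inter_subset_left)⟩
      · intro m hm m' hm' hne
        obtain ⟨p, hp, rfl⟩ := Finset.mem_image.mp hm
        obtain ⟨q, hq, rfl⟩ := Finset.mem_image.mp hm'
        simp only [hT, mem_filter] at hp hq
        have hpq : p ≠ q := fun h => hne (by rw [h])
        exact (P.disjoint hp.1 hq.1 hpq).mono inter_subset_left inter_subset_left
      
    have := hMmax M' hmatch
    simp only [List.map_nil, List.sum_nil, Nat.zero_add]
    omega
  | cons X L ih =>
    intro S hS
    obtain ⟨hXS, hXcl, hX3, hXmax, hrec⟩ := hS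
    have hstep : ∀ p ∈ P.parts,
        (p ∩ S).card.choose 2 + (if 2 ≤ (p ∩ S).card then 1 else 0)
          ≤ (p ∩ X).card * (X.card - 1) +
            ((p ∩ (S \ X)).card.choose 2 + (if 2 ≤ (p ∩ (S \ X)).card then 1 else 0)) := by
      intro p hp
      have hsplit := inter_card_split p S X hXS
      have hle : (p ∩ S).card ≤ X.card :=
        hXmax _ inter_subset_right ((hP p hp).subset (by exact_mod_cast inter_subset_left))
      rw [hsplit] at hle ⊢
      have := key_ineq (p ∩ X).card (p ∩ (S \ X)).card X.card hle hX3
      omega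
    calc ∑ p ∈ P.parts, ((p ∩ S).card.choose 2 + (if 2 ≤ (p ∩ S).card then 1 else 0))
        ≤ ∑ p ∈ P.parts, ((p ∩ X).card * (X.card - 1) +
            ((p ∩ (S \ X)).card.choose 2 + (if 2 ≤ (p ∩ (S \ X)).card then 1 else 0))) :=
          Finset.sum_le_sum hstep
      _ = (∑ p ∈ P.parts, (p ∩ X).card) * (X.card - 1) +
            ∑ p ∈ P.parts, ((p ∩ (S \ X)).card.choose 2 +
              (if 2 ≤ (p ∩ (S \ X)).card then 1 else 0)) := by
          rw [Finset.sum_add_distrib, Finset.sum_mul]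
      _ = 2 * X.card.choose 2 +
            ∑ p ∈ P.parts, ((p ∩ (S \ X)).card.choose 2 +
              (if 2 ≤ (p ∩ (S \ X)).card then 1 else 0)) := by
          rw [sum_inter_card, two_mul_choose_two]
      _ ≤ 2 * X.card.choose 2 + 2 * (((L.map fun X => X.card.choose 2).sum) + M.card) :=
          Nat.add_le_add_left (ih _ hrec) _
      _ = 2 * ((((X :: L).map fun X => X.card.choose 2).sum) + M.card) := by
          simp only [List.map_cons, List.sum_cons]; ring

end

/-- Greedy-Edmonds is a 2ω'/(ω'+1)-approximation for Clique Partition, where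
ω' = C(ω(G), 2). -/
theorem greedyEdmonds_approx {V : Type*} [Fintype V] [DecidableEq V] (G : SimpleGraph V)
    (w : ℕ) (hw : IsGreatest {n | ∃ s : Finset V, G.IsNClique n s} w)
    (L : List (Finset V)) (R : Finset V) (M : Finset (Finset V))
    (hL : Phase1 G Finset.univ L R)
    (hM : IsMatchingOn G R M)
    (hMmax : ∀ M' : Finset (Finset V), IsMatchingOn G R M' → M'.card ≤ M.card)
    (P : Finpartition (Finset.univ : Finset V)) (hP : ∀ p ∈ P.parts, G.IsClique ↑p) :
    ((∑ p ∈ P.parts, p.card.choose 2 : ℕ) : ℚ) ≤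
      (2 * w.choose 2 : ℚ) / (w.choose 2 + 1) *
        (((L.map fun X => X.card.choose 2).sum + M.card : ℕ) : ℚ) := by
  classical
  set A := (L.map fun X => X.card.choose 2).sum + M.card with hA
  have h1 : ∑ p ∈ P.parts, (p.card.choose 2 + (if 2 ≤ p.card then 1 else 0)) ≤ 2 * A := by
    have := phase_bound G R M hMmax P hP L Finset.univ hL
    simpa [Finset.inter_univ] using this
  set w' := w.choose 2 with hw'
  have h2 : ∑ p ∈ P.parts, p.card.choose 2
      ≤ w' * ∑ p ∈ P.parts, (if 2 ≤ p.card then 1 else 0) := by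
    rw [Finset.mul_sum]
    apply Finset.sum_le_sum
    intro p hp
    by_cases hc : 2 ≤ p.card
    · rw [if_pos hc, mul_one]
      have hpw : p.card ≤ w := hw.2 ⟨p, ⟨hP p hp, rfl⟩⟩
      exact Nat.choose_le_choose 2 hpw
    · rw [if_neg hc, mul_zero, Nat.choose_eq_zero_of_lt (by omega)]
  set O := ∑ p ∈ P.parts, p.card.choose 2 with hO
  set N := ∑ p ∈ P.parts, (if 2 ≤ p.card then 1 else 0) with hN
  have h3 : O + N ≤ 2 * A := by
    have : O + N = ∑ p ∈ P.parts, (p.card.choose 2 + (if 2 ≤ p.card then 1 else 0)) := by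
      rw [hO, hN, Finset.sum_add_distrib]
    omega
  have hnat : O * (w' + 1) ≤ 2 * w' * A := by
    calc O * (w' + 1) = w' * O + O := by ring
      _ ≤ w' * O + w' * N := by omega
      _ = w' * (O + N) := by ring
      _ ≤ w' * (2 * A) := Nat.mul_le_mul_left _ h3
      _ = 2 * w' * A := by ring
  rw [div_mul_eq_mul_div, le_div_iff₀ (by positivity)]
  push_cast
  exact_mod_cast hnat
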